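/- Let n ≥ 3, let G = ⟨α, τ : α^n = τ^2 = 1, τα = α^{-1}τ⟩ be the dihedral group of order 2n, and let S be a sequence over G with S ∉ F(⟨α⟩). Write S_{⟨α⟩} = α^{x_1} ⋯ α^{x_s} with x_1, …, x_s ∈ ℤ/nℤ. Then S is a product-one sequence if and only if |S_{τ⟨α⟩}| = 2ℓ is even and 0 ∈ {x_1, −x_1} + ⋯ + {x_s, −x_s} + Σ_ℓ(2 S^+_{τ⟨α⟩}) − σ(S^+_{τ⟨α⟩}) in ℤ/nℤ. -/

import Mathlib

namespace ProductOne

open scoped Classical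

variable {G : Type*} [Group G]

/-- `S` is a product-one sequence over `G`: its terms can be ordered with product `1`. -/
def IsProductOne (S : Multiset G) : Prop :=
  ∃ l : List G, (l : Multiset G) = S ∧ l.prod = 1

/-- `S` is an atom (a minimal product-one sequence): it is a nontrivial product-one
sequence that is not the concatenation of two nontrivial product-one sequences. -/
def IsAtomSeq (S : Multiset G) : Prop :=
  S ≠ 0 ∧ IsProductOne S ∧
    ∀ A B : Multiset G, S = A + B → IsProductOne A → IsProductOne B → A = 0 ∨ B = 0

/-- `S` is a sequence over the subset `G₀ ⊆ G`. -/
def SeqOn (G₀ : Set G) (S : Multiset G) : Prop := ∀ g ∈ S, g ∈ G₀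

/-- `S` is an atom of the monoid `B(G₀)` of product-one sequences over `G₀`. -/
def IsAtomSeqOn (G₀ : Set G) (S : Multiset G) : Prop := SeqOn G₀ S ∧ IsAtomSeq S

/-- The set of lengths `L(A)` of factorizations of `A` into atoms over `G₀`. -/
def lengthsOn (G₀ : Set G) (A : Multiset G) : Set ℕ :=
  {k | ∃ f : Multiset (Multiset G), Multiset.card f = k ∧
        (∀ U ∈ f, IsAtomSeqOn G₀ U) ∧ f.sum = A}

/-- The set of lengths `L(A)` over the whole group. -/
def lengths (A : Multiset G) : Set ℕ := lengthsOn Set.univ A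

/-- The set of distances of a set `L ⊆ ℕ`. -/
def distancesOf (L : Set ℕ) : Set ℕ :=
  {d | 0 < d ∧ ∃ a, a ∈ L ∧ a + d ∈ L ∧ ∀ b ∈ L, ¬(a < b ∧ b < a + d)}

/-- The set of distances `Δ(G₀)` of the monoid `B(G₀)`. -/
def DeltaOn (G₀ : Set G) : Set ℕ :=
  {d | ∃ A : Multiset G, SeqOn G₀ A ∧ IsProductOne A ∧ d ∈ distancesOf (lengthsOn G₀ A)}

/-- The set of distances `Δ(G)` of `B(G)`. -/
def Delta (G : Type*) [Group G] : Set ℕ := DeltaOn (Set.univ : Set G)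

/-- The large Davenport constant of `G₀`: maximal length of an atom of `B(G₀)`. -/
noncomputable def DavenportOn (G₀ : Set G) : ℕ :=
  sSup {k | ∃ S : Multiset G, IsAtomSeqOn G₀ S ∧ Multiset.card S = k}

/-- The large Davenport constant `D(G)`. -/
noncomputable def Davenport (G : Type*) [Group G] : ℕ :=
  DavenportOn (Set.univ : Set G)

/-- The small Davenport constant `d(G₀)`: maximal length of a product-one free
sequence over `G₀`. -/
noncomputable def smallDavenportOn (G₀ : Set G) : ℕ :=
  sSup {k | ∃ S : Multiset G, SeqOn G₀ S ∧ Multiset.card S = k ∧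
        ∀ T : Multiset G, T ≤ S → T ≠ 0 → ¬IsProductOne T}

/-- `Δ*(G) = {min Δ(G₀) : G₀ ⊆ G with Δ(G₀) ≠ ∅}`. -/
def DeltaStar (G : Type*) [Group G] : Set ℕ :=
  {d | ∃ G₀ : Set G, (DeltaOn G₀).Nonempty ∧ d = sInf (DeltaOn G₀)}

/-- The elasticity `ρ(L) = max L / min L` of a set of lengths (with the set of
positive elements used, and `ρ = 1` if there are none). -/
noncomputable def elasticity (L : Set ℕ) : ℚ :=
  if (L ∩ {k | 0 < k}).Nonempty then
    ((sSup (L ∩ {k | 0 < k}) : ℕ) : ℚ) / ((sInf (L ∩ {k | 0 < k}) : ℕ) : ℚ)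
  else 1

/-- The elasticity `ρ(G₀)` of the monoid `B(G₀)`. -/
noncomputable def rhoOn (G₀ : Set G) : ℝ :=
  sSup {x : ℝ | ∃ A : Multiset G, SeqOn G₀ A ∧ IsProductOne A ∧
    x = (elasticity (lengthsOn G₀ A) : ℝ)}

/-- `Δ*_ρ(G) = {min Δ(G₀) : G₀ ⊆ G with ρ(G₀) = D(G)/2}`. -/
noncomputable def DeltaRhoStar (G : Type*) [Group G] : Set ℕ :=
  {d | ∃ G₀ : Set G, rhoOn G₀ = (Davenport G : ℝ) / 2 ∧ d = sInf (DeltaOn G₀)}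

/-- Divisibility in the monoid `B(G)`. -/
def BDvd (A S : Multiset G) : Prop :=
  ∃ C : Multiset G, IsProductOne C ∧ S = A + C

/-- The `ω`-invariant `ω(B(G), A)`. -/
noncomputable def omegaAt (A : Multiset G) : ℕ∞ :=
  sInf {N : ℕ∞ | ∀ f : Multiset (Multiset G),
    (∀ B ∈ f, IsProductOne B) → BDvd A f.sum →
    ∃ t ≤ f, (Multiset.card t : ℕ∞) ≤ N ∧ BDvd A t.sum}

/-- `ω(G) = sup {ω(B(G), U) : U an atom of B(G)}`. -/
noncomputable def omegaInv (G : Type*) [Group G] : ℕ∞ :=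
  ⨆ U ∈ {U : Multiset G | IsAtomSeq U}, omegaAt U

/-- `z` is a factorization of `A` into atoms. -/
def IsFactorization (A : Multiset G) (z : Multiset (Multiset G)) : Prop :=
  (∀ U ∈ z, IsAtomSeq U) ∧ z.sum = A

/-- The distance between two factorizations. -/
noncomputable def factDist (z z' : Multiset (Multiset G)) : ℕ :=
  letI := Classical.decEq (Multiset G)
  max (Multiset.card (z - z')) (Multiset.card (z' - z))

/-- The catenary degree `c(A)`. -/
noncomputable def catenaryAt (A : Multiset G) : ℕ∞ :=
  sInf {N : ℕ∞ | ∀ z z' : Multiset (Multiset G),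
    IsFactorization A z → IsFactorization A z' →
    Relation.ReflTransGen
      (fun x y => IsFactorization A y ∧ (factDist x y : ℕ∞) ≤ N) z z'}

/-- The set of positive catenary degrees `Ca(G)`. -/
noncomputable def CatenarySet (G : Type*) [Group G] : Set ℕ∞ :=
  {c | ∃ A : Multiset G, IsProductOne A ∧ catenaryAt A = c ∧ 0 < c}

/-- The catenary degree `c(G)` of `B(G)`. -/
noncomputable def catenaryDegree (G : Type*) [Group G] : ℕ∞ :=
  ⨆ A ∈ {A : Multiset G | IsProductOne A}, catenaryAt A

/-- The cross number `k(S)` of a sequence. -/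
noncomputable def crossNumber (S : Multiset G) : ℚ :=
  (S.map fun g => (1 : ℚ) / (orderOf g : ℚ)).sum

/-- The system of sets of lengths `L(G)`. -/
def LSystem (G : Type*) [Group G] : Set (Set ℕ) :=
  {L | ∃ A : Multiset G, IsProductOne A ∧ L = lengths A}

/-- The set of products `π(S)` of all orderings of the terms of `S`. -/
def piSet (S : Multiset G) : Set G :=
  {g | ∃ l : List G, (l : Multiset G) = S ∧ l.prod = g}

/-- The sumset `{x₁, -x₁} + ⋯ + {x_s, -x_s}` for a sequence `a = x₁ ⋯ x_s`. -/
def signedSums {α : Type*} [AddCommGroup α] (a : Multiset α) : Set α :=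
  {z | ∃ t ≤ a, z = t.sum + t.sum - a.sum}

/-- `Σ_k(T)`: the set of sums of `k`-term subsequences of `T`. -/
def subseqSums {α : Type*} [AddCommMonoid α] (k : ℕ) (T : Multiset α) : Set α :=
  {z | ∃ t ≤ T, Multiset.card t = k ∧ t.sum = z}

/-- The subsequence `S_X` of all terms of `S` lying in `X`. -/
noncomputable def restrictTo (X : Set G) (S : Multiset G) : Multiset G :=
  letI := Classical.decPred fun g => g ∈ X
  S.filter fun g => g ∈ X

/-- The maximum multiplicity `h(S)` of a term of `S`. -/
noncomputable def maxMultiplicity {α : Type*} (S : Multiset α) : ℕ :=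
  letI := Classical.decEq α
  S.toFinset.sup S.count

end ProductOne

/-!
Write `α^x = r x` and `τα^y = sr y`. In a product of the terms of `S`, a term `α^x` or `τα^y`
contributes `±x` or `±y` to the exponent, with sign `+` exactly when an even number of terms from
`τ⟨α⟩` follow it. So the product lies in `⟨α⟩` only if `|S_{τ⟨α⟩}|` is even, and then exactly half
of the terms from `τ⟨α⟩` carry the sign `+`. Conversely, every such choice of signs occurs, provided
`S_{τ⟨α⟩}` is nonempty: put the negated terms of `S_{⟨α⟩}` between the first pair `τα^{y'}, τα^y`
of terms from `τ⟨α⟩`, and the remaining terms from `τ⟨α⟩` in pairs `τα^{y'}, τα^y` after them,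
where `y` is to be taken positively and `y'` negatively.
-/

theorem Multiset.exists_le_map_eq {α β : Type*} {f : α → β} {s : Multiset α} {v : Multiset β}
    (h : v ≤ s.map f) : ∃ u ≤ s, u.map f = v := by
  induction s using Quotient.inductionOn
  induction v using Quotient.inductionOn
  obtain ⟨w, hw, hsub⟩ := Multiset.coe_le.mp h
  obtain ⟨u, hu, rfl⟩ := List.sublist_map_iff.mp hsub
  exact ⟨u, Multiset.coe_le.mpr hu.subperm, Quotient.sound hw⟩

namespace ProductOne

open DihedralGroup Multiset

section piSet

variable {G : Type*} [Group G]

theorem mem_piSet_singleton (g : G) : g ∈ piSet ({g} : Multiset G) :=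
  ⟨[g], rfl, List.prod_singleton⟩

theorem mul_mem_piSet_add {S T : Multiset G} {g h : G} (hg : g ∈ piSet S) (hh : h ∈ piSet T) :
    g * h ∈ piSet (S + T) := by
  obtain ⟨l, rfl, rfl⟩ := hg
  obtain ⟨m, rfl, rfl⟩ := hh
  exact ⟨l ++ m, rfl, List.prod_append⟩

end piSet

variable {n : ℕ}

/-- `g = α^z` with `2|u| = |b|`, or `g = τα^z` with `2|u| = |b| + 1`, where `z` is the signed sum
of the terms of `a` and `b` whose positive terms are those of `t ≤ a` and `u ≤ b`. -/
def IsSignedProduct (a b : Multiset (ZMod n)) (g : DihedralGroup n) : Prop :=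
  ∃ t ≤ a, ∃ u ≤ b,
    (2 * card u = card b ∧ g = r (2 * t.sum - a.sum + (2 * u.sum - b.sum))) ∨
    (2 * card u = card b + 1 ∧ g = sr (2 * t.sum - a.sum + (2 * u.sum - b.sum)))

theorem IsSignedProduct.r_mul {a b : Multiset (ZMod n)} {g : DihedralGroup n}
    (hg : IsSignedProduct a b g) (x : ZMod n) : IsSignedProduct (x ::ₘ a) b (r x * g) := by
  obtain ⟨t, ht, u, hu, ⟨hcard, rfl⟩ | ⟨hcard, rfl⟩⟩ := hg
  · refine ⟨x ::ₘ t, cons_le_cons x ht, u, hu, .inl ⟨hcard, ?_⟩⟩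
    rw [r_mul_r, sum_cons, sum_cons]
    congr 1
    ring
  · refine ⟨t, ht.trans (le_cons_self a x), u, hu, .inr ⟨hcard, ?_⟩⟩
    rw [r_mul_sr, sum_cons]
    congr 1
    ring

theorem IsSignedProduct.sr_mul {a b : Multiset (ZMod n)} {g : DihedralGroup n}
    (hg : IsSignedProduct a b g) (y : ZMod n) : IsSignedProduct a (y ::ₘ b) (sr y * g) := by
  obtain ⟨t, ht, u, hu, ⟨hcard, rfl⟩ | ⟨hcard, rfl⟩⟩ := hg
  · refine ⟨t, ht, y ::ₘ u, cons_le_cons y hu, .inr ⟨by simp; omega, ?_⟩⟩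
    rw [sr_mul_r, sum_cons, sum_cons]
    congr 1
    ring
  · refine ⟨t, ht, u, hu.trans (le_cons_self b y), .inl ⟨by simp; omega, ?_⟩⟩
    rw [sr_mul_sr, sum_cons]
    congr 1
    ring

theorem exists_of_cons_eq_map_r_add_map_sr {c : DihedralGroup n} {s : Multiset (DihedralGroup n)}
    {a b : Multiset (ZMod n)} (h : c ::ₘ s = a.map r + b.map sr) :
    (∃ x a', a = x ::ₘ a' ∧ c = r x ∧ s = a'.map r + b.map sr) ∨
      (∃ y b', b = y ::ₘ b' ∧ c = sr y ∧ s = a.map r + b'.map sr) := by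
  have hc : c ∈ a.map r + b.map sr := h ▸ mem_cons_self c s
  rcases mem_add.mp hc with hc | hc <;> obtain ⟨x, hx, rfl⟩ := mem_map.mp hc
  · obtain ⟨a', rfl⟩ := exists_cons_of_mem hx
    refine .inl ⟨x, a', rfl, rfl, (cons_inj_right (r x)).mp ?_⟩
    rw [h, map_cons, cons_add]
  · obtain ⟨b', rfl⟩ := exists_cons_of_mem hx
    refine .inr ⟨x, b', rfl, rfl, (cons_inj_right (sr x)).mp ?_⟩
    rw [h, map_cons, add_cons]

theorem isSignedProduct_of_mem_piSet {a b : Multiset (ZMod n)} {g : DihedralGroup n}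
    (hg : g ∈ piSet (a.map r + b.map sr)) : IsSignedProduct a b g := by
  obtain ⟨l, hl, rfl⟩ := hg
  induction l generalizing a b with
  | nil =>
    obtain ⟨rfl, rfl⟩ : a = 0 ∧ b = 0 := by simpa [eq_comm (a := (0 : Multiset _))] using hl
    exact ⟨0, le_rfl, 0, le_rfl, .inl ⟨rfl, by simp⟩⟩
  | cons c l ih =>
    rw [← cons_coe] at hl
    rcases exists_of_cons_eq_map_r_add_map_sr hl with ⟨x, a', rfl, rfl, hl'⟩ | ⟨y, b', rfl, rfl, hl'⟩
    · exact (ih hl').r_mul x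
    · exact (ih hl').sr_mul y

theorem r_sum_mem_piSet (s : Multiset (ZMod n)) : r s.sum ∈ piSet (s.map r) := by
  induction s using Multiset.induction with
  | empty => exact ⟨[], rfl, rfl⟩
  | cons x s ih =>
    rw [sum_cons, ← r_mul_r, map_cons, ← singleton_add]
    exact mul_mem_piSet_add (mem_piSet_singleton _) ih

theorem r_sub_mem_piSet {u w : Multiset (ZMod n)} (h : card u = card w) :
    r (u.sum - w.sum) ∈ piSet (w.map sr + u.map sr) := by
  induction u using Multiset.induction generalizing w with
  | empty =>
    obtain rfl : w = 0 := card_eq_zero.mp (by simpa using h.symm)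
    exact ⟨[], rfl, by simp⟩
  | cons y u ih =>
    obtain ⟨z, hz⟩ := (card_pos_iff_exists_mem (s := w)).mp (by simp at h; omega)
    obtain ⟨w, rfl⟩ := exists_cons_of_mem hz
    have hpair : r (y - z) ∈ piSet ({sr z} + {sr y}) :=
      sr_mul_sr z y ▸ mul_mem_piSet_add (mem_piSet_singleton _) (mem_piSet_singleton _)
    have hmem := mul_mem_piSet_add hpair (ih (by simpa using h))
    have hsum : (y ::ₘ u).sum - (z ::ₘ w).sum = y - z + (u.sum - w.sum) := by
      simp only [sum_cons]
      ring
    have hseq : (z ::ₘ w).map sr + (y ::ₘ u).map sr = {sr z} + {sr y} + (w.map sr + u.map sr) := by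
      simp only [← singleton_add, map_add, map_singleton]
      abel
    rwa [hsum, hseq, ← r_mul_r]

theorem r_mem_piSet_of_le {a b t u : Multiset (ZMod n)} (ht : t ≤ a) (hu : u ≤ b)
    (hcard : card b = 2 * card u) (hu0 : u ≠ 0) :
    r (2 * t.sum - a.sum + (2 * u.sum - b.sum)) ∈ piSet (a.map r + b.map sr) := by
  obtain ⟨a', rfl⟩ := Multiset.le_iff_exists_add.mp ht
  obtain ⟨w, rfl⟩ := Multiset.le_iff_exists_add.mp hu
  obtain ⟨y, hy⟩ := exists_mem_of_ne_zero hu0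
  obtain ⟨u, rfl⟩ := exists_cons_of_mem hy
  obtain ⟨z, hz⟩ := (card_pos_iff_exists_mem (s := w)).mp (by simp at hcard; omega)
  obtain ⟨w, rfl⟩ := exists_cons_of_mem hz
  have hmid : sr z * r a'.sum * sr y ∈ piSet ({sr z} + a'.map r + {sr y}) :=
    mul_mem_piSet_add (mul_mem_piSet_add (mem_piSet_singleton _) (r_sum_mem_piSet a'))
      (mem_piSet_singleton _)
  have hmem := mul_mem_piSet_add (mul_mem_piSet_add (r_sum_mem_piSet t) hmid)
    (r_sub_mem_piSet (u := u) (w := w) (by simp at hcard; omega))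
  have hprod : r (2 * t.sum - (t + a').sum + (2 * (y ::ₘ u).sum - (y ::ₘ u + z ::ₘ w).sum)) =
      r t.sum * (sr z * r a'.sum * sr y) * r (u.sum - w.sum) := by
    simp only [sr_mul_r, sr_mul_sr, r_mul_r, sum_add, sum_cons]
    congr 1
    ring
  have hseq : (t + a').map r + (y ::ₘ u + z ::ₘ w).map sr =
      t.map r + ({sr z} + a'.map r + {sr y}) + (w.map sr + u.map sr) := by
    simp only [← singleton_add, map_add, map_singleton]
    abel
  rwa [hprod, hseq]

end ProductOne

open ProductOne DihedralGroup in
theorem isProductOne_dihedral_iff_general (n : ℕ) (a b : Multiset (ZMod n))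
    (hb : b ≠ 0) :
    IsProductOne (a.map DihedralGroup.r + b.map DihedralGroup.sr) ↔
      ∃ ℓ : ℕ, Multiset.card b = 2 * ℓ ∧
        (0 : ZMod n) ∈ {z : ZMod n | ∃ x ∈ signedSums a,
          ∃ y ∈ subseqSums ℓ (b.map fun v => 2 * v), z = x + y - b.sum} := by
  constructor
  · intro h
    obtain ⟨t, ht, u, hu, ⟨hcard, hprod⟩ | ⟨-, hprod⟩⟩ := isSignedProduct_of_mem_piSet h
    · refine ⟨_, hcard.symm, _, ⟨t, ht, rfl⟩, _,
        ⟨u.map (2 * ·), Multiset.map_le_map hu, Multiset.card_map _ _, rfl⟩, ?_⟩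
      rw [one_def, r.injEq] at hprod
      rw [Multiset.sum_map_mul_left, Multiset.map_id']
      linear_combination hprod
    · rw [one_def] at hprod
      cases hprod
  · rintro ⟨ℓ, hcard, _, ⟨t, ht, rfl⟩, _, ⟨v, hv, rfl, rfl⟩, hz⟩
    obtain ⟨u, hu, rfl⟩ := Multiset.exists_le_map_eq hv
    have hu0 : u ≠ 0 := by
      rintro rfl
      exact hb (Multiset.card_eq_zero.mp (by simpa using hcard))
    have hone : r (2 * t.sum - a.sum + (2 * u.sum - b.sum)) = 1 := by
      rw [Multiset.sum_map_mul_left, Multiset.map_id'] at hz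
      rw [one_def]
      congr 1
      linear_combination -hz
    have hmem := r_mem_piSet_of_le ht hu (by simpa using hcard) hu0
    rwa [hone] at hmem

open ProductOne DihedralGroup in
/-- For a sequence `S` over the dihedral group `D_{2n}` (`n ≥ 3`) not
consisting solely of terms from `⟨α⟩` (encoded by multisets `a`, `b` with `b ≠ 0` as in
Statement 14), `S` is a product-one sequence iff `|S_{τ⟨α⟩}| = 2ℓ` is even and
`0 ∈ {x₁,-x₁} + ⋯ + {x_s,-x_s} + Σ_ℓ(2 S⁺_{τ⟨α⟩}) - σ(S⁺_{τ⟨α⟩})`. -/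
theorem isProductOne_dihedral_iff (n : ℕ) (hn : 3 ≤ n) (a b : Multiset (ZMod n))
    (hb : b ≠ 0) :
    IsProductOne (a.map DihedralGroup.r + b.map DihedralGroup.sr) ↔
      ∃ ℓ : ℕ, Multiset.card b = 2 * ℓ ∧
        (0 : ZMod n) ∈ {z : ZMod n | ∃ x ∈ signedSums a,
          ∃ y ∈ subseqSums ℓ (b.map fun v => 2 * v), z = x + y - b.sum} :=
  isProductOne_dihedral_iff_general n a b hb
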